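/- Let p be a prime, R a perfect 𝔽_p-algebra, and 𝔟 ⊆ R an 𝔽_p-vector-space basis of R. Let ℤ𝔟 be the free ℤ-module on 𝔟 and consider the additive map ℤ𝔟 → ℤR/I^n induced by b ↦ [b]. Then for every n ≥ 1 the induced additive map ℤ𝔟/p^n·ℤ𝔟 → ℤR/I^n is bijective; consequently the induced map from the p-adic completion of ℤ𝔟 to C(R) is an isomorphism of topological additive groups. -/

import Mathlib

set_option synthInstance.maxHeartbeats 1000000
set_option maxHeartbeats 1000000

open MonoidAlgebra

/-- `ℤR`: the monoid algebra over `ℤ` of the multiplicative monoid `(R, ·)`. -/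
abbrev ZR (R : Type*) [CommRing R] : Type _ := MonoidAlgebra ℤ R

/-- The canonical ring homomorphism `π : ℤR → R`, `Σ n_r [r] ↦ Σ n_r r`. -/
noncomputable def piHom (R : Type*) [CommRing R] : ZR R →+* R :=
  (MonoidAlgebra.lift ℤ R R (MonoidHom.id R)).toRingHom

/-- The ideal `I = ker (π : ℤR → R)`. -/
noncomputable def Iid (R : Type*) [CommRing R] : Ideal (ZR R) := RingHom.ker (piHom R)

/-- The additive map `ℤ𝔟 → ℤR/I^n` induced by `i ↦ [b i]`, where the free `ℤ`-module `ℤ𝔟` on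
the basis `𝔟 = (b i)` is realized as `ι →₀ ℤ`. -/
noncomputable def zbMap (R : Type*) [CommRing R] {ι : Type*} (b : ι → R) (n : ℕ) :
    (ι →₀ ℤ) →+ ZR R ⧸ Iid R ^ n :=
  Finsupp.liftAddHom fun i => zmultiplesHom _ (Ideal.Quotient.mk _ (of ℤ R (b i)))

/-! Perfectness gives `[a] + [b] ≡ [a + b]` modulo `(p) + I²`: write `a = u^p`, `b = v^p` and use
`(x + y)^p ≡ x^p + y^p` mod `p` together with `[u] + [v] - [u + v] ∈ I`. So `r ↦ [r]` is additive
modulo `(p) + I²`, whence `I ⊆ (p) + I²` and `I^n ⊆ (p^n) + I^(n+1)`. Since `𝔟` spans `R = ℤR/I`,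
correcting an approximation modulo `I^n` by `p^n` times an approximation modulo `I` shows that
`ℤ𝔟` is dense in `ℤR` for the `I`-adic topology.

For the kernel, the ring map `θ : ℤR → W(R)`, `[r] ↦` Teichmüller lift of `r`, satisfies
`θ⁻¹(p W(R)) = I`, so `θ(I^n) ⊆ p^n W(R)`. If `θ(Σ x_b [b]) ∈ p W(R)` then `Σ x_b b = 0` in `R`,
so `p` divides every `x_b`; as `W(R)` is `p`-torsion free, one can divide by `p` and repeat
`n` times. -/

section IdealPowers

variable {A : Type*} [CommRing A] {I : Ideal A}

theorem Ideal.pow_le_span_pow_sup_pow_succ {a : A} (ha : a ∈ I)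
    (hI : I ≤ Ideal.span {a} ⊔ I ^ 2) (n : ℕ) :
    I ^ n ≤ Ideal.span {a ^ n} ⊔ I ^ (n + 1) := by
  induction n with
  | zero => simp [Ideal.span_singleton_one]
  | succ n ih =>
    have haI : Ideal.span {a ^ n} * I ^ 2 ≤ I ^ (n + 2) := by
      rw [pow_add]
      exact Ideal.mul_mono_left ((Ideal.span_singleton_le_iff_mem _).2 (Ideal.pow_mem_pow ha n))
    calc I ^ (n + 1) = I ^ n * I := pow_succ _ _
      _ ≤ (Ideal.span {a ^ n} ⊔ I ^ (n + 1)) * I := Ideal.mul_mono_left ih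
      _ ≤ Ideal.span {a ^ n} * (Ideal.span {a} ⊔ I ^ 2) ⊔ I ^ (n + 2) := by
        rw [Ideal.sup_mul, ← pow_succ]
        exact sup_le_sup_right (Ideal.mul_mono_right hI) _
      _ ≤ Ideal.span {a ^ (n + 1)} ⊔ I ^ (n + 2) := by
        rw [Ideal.mul_sup, Ideal.span_singleton_mul_span_singleton, ← pow_succ, sup_assoc]
        exact sup_le_sup_left (sup_le haI le_rfl) _

theorem AddSubgroup.exists_sub_mem_pow_of_exists_sub_mem {q : ℕ} (hq : (q : A) ∈ I)
    (hI : I ≤ Ideal.span {(q : A)} ⊔ I ^ 2) (M : AddSubgroup A)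
    (hM : ∀ z, ∃ m ∈ M, z - m ∈ I) (n : ℕ) (z : A) :
    ∃ m ∈ M, z - m ∈ I ^ n := by
  induction n with
  | zero => exact ⟨0, M.zero_mem, by simp⟩
  | succ n ih =>
    obtain ⟨m, hm, hzm⟩ := ih
    obtain ⟨a, ha, v, hv, huv⟩ :=
      Submodule.mem_sup.1 (Ideal.pow_le_span_pow_sup_pow_succ hq hI n hzm)
    obtain ⟨u, rfl⟩ := Ideal.mem_span_singleton'.1 ha
    obtain ⟨m₁, hm₁, hum₁⟩ := hM u
    refine ⟨m + q ^ n • m₁, M.add_mem hm (M.nsmul_mem hm₁ _), ?_⟩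
    have hsplit : z - (m + q ^ n • m₁) = (q : A) ^ n * (u - m₁) + v := by
      rw [nsmul_eq_mul]
      push_cast
      linear_combination huv.symm
    rw [hsplit, pow_succ]
    exact Ideal.add_mem _ (Ideal.mul_mem_mul (Ideal.pow_mem_pow hq n) hum₁) hv

end IdealPowers

section MonoidAlgebra

variable {R : Type*} [CommRing R]

@[simp]
theorem piHom_single (r : R) (m : ℤ) : piHom R (single r m) = m • r := by
  simp [piHom]

noncomputable def zbLift {ι : Type*} (b : ι → R) : (ι →₀ ℤ) →+ ZR R :=
  Finsupp.liftAddHom fun i => zmultiplesHom _ (of ℤ R (b i))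

theorem zbMap_apply {ι : Type*} (b : ι → R) (n : ℕ) (x : ι →₀ ℤ) :
    zbMap R b n x = Ideal.Quotient.mk (Iid R ^ n) (zbLift b x) := by
  change zbMap R b n x = ((Ideal.Quotient.mk (Iid R ^ n)).toAddMonoidHom.comp (zbLift b)) x
  congr 1
  ext i
  simp [zbMap, zbLift]

variable (p : ℕ) [CharP R p]

theorem natCast_mem_Iid : (p : ZR R) ∈ Iid R := by
  rw [Iid, RingHom.mem_ker, map_natCast, CharP.cast_eq_zero]

variable [hp : Fact p.Prime]

theorem of_add_sub_of_add_mem (hperf : Function.Bijective fun x : R => x ^ p) (a b : R) :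
    of ℤ R a + of ℤ R b - of ℤ R (a + b) ∈ Ideal.span {(p : ZR R)} ⊔ Iid R ^ 2 := by
  obtain ⟨u, rfl⟩ := hperf.2 a
  obtain ⟨v, rfl⟩ := hperf.2 b
  set d := of ℤ R u + of ℤ R v - of ℤ R (u + v)
  have hd : d ∈ Iid R := by simp [d, Iid]
  obtain ⟨r, hr⟩ := (Commute.all (of ℤ R u) (of ℤ R v)).exists_add_pow_prime_eq hp.out
  obtain ⟨s, hs⟩ := (Commute.all (of ℤ R u + of ℤ R v) (-d)).exists_add_pow_prime_eq hp.out
  have hsplit : of ℤ R (u ^ p) + of ℤ R (v ^ p) - of ℤ R (u ^ p + v ^ p) =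
      (p : ZR R) * -(of ℤ R u * of ℤ R v * r + (of ℤ R u + of ℤ R v) * -d * s) + -(-d) ^ p := by
    rw [← add_pow_char, map_pow, map_pow, map_pow,
      show of ℤ R (u + v) = of ℤ R u + of ℤ R v + -d by simp [d]]
    linear_combination -hs - hr
  rw [hsplit]
  refine Ideal.add_mem _ (Ideal.mem_sup_left (Ideal.mem_span_singleton'.2 ⟨_, mul_comm _ _⟩))
    (Ideal.mem_sup_right (neg_mem ?_))
  exact Ideal.pow_le_pow_right hp.out.two_le (Ideal.pow_mem_pow (neg_mem hd) p)

theorem Iid_le_span_sup_sq (hperf : Function.Bijective fun x : R => x ^ p) :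
    Iid R ≤ Ideal.span {(p : ZR R)} ⊔ Iid R ^ 2 := by
  set K := Ideal.span {(p : ZR R)} ⊔ Iid R ^ 2
  let φ : R →+ ZR R ⧸ K := AddMonoidHom.mk' (fun r => Ideal.Quotient.mk K (of ℤ R r)) fun a b => by
    rw [eq_comm, ← sub_eq_zero, ← map_add, ← map_sub, Ideal.Quotient.eq_zero_iff_mem]
    exact of_add_sub_of_add_mem p hperf a b
  have hφ : (Ideal.Quotient.mk K).toAddMonoidHom = φ.comp (piHom R).toAddMonoidHom := by
    ext r
    simp [φ]
  intro z hz
  rw [← Ideal.Quotient.eq_zero_iff_mem]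
  simpa [(RingHom.mem_ker).1 hz] using DFunLike.congr_fun hφ z

end MonoidAlgebra

section Basis

variable {R : Type*} [CommRing R] (p : ℕ) [Algebra (ZMod p) R] {ι : Type*}
  (b : Module.Basis ι (ZMod p) R)

theorem piHom_zbLift (x : ι →₀ ℤ) :
    piHom R (zbLift (fun i => b i) x) = b.repr.symm (x.mapRange Int.cast Int.cast_zero) := by
  induction x using Finsupp.induction_linear with
  | zero => simp
  | add x y hx hy => rw [map_add, map_add, hx, hy, Finsupp.mapRange_add (by simp), map_add]
  | single i m => simp [zbLift, Int.cast_smul_eq_zsmul]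

theorem exists_mem_range_zbLift_sub_mem_Iid (z : ZR R) :
    ∃ m ∈ (zbLift (fun i => b i)).range, z - m ∈ Iid R := by
  obtain ⟨x, hx⟩ := Finsupp.mapRange_surjective (Int.cast : ℤ → ZMod p) Int.cast_zero
    ZMod.intCast_surjective (b.repr (piHom R z))
  refine ⟨_, ⟨x, rfl⟩, ?_⟩
  rw [Iid, RingHom.mem_ker, map_sub, piHom_zbLift, hx, LinearEquiv.symm_apply_apply, sub_self]

theorem exists_eq_smul_of_piHom_zbLift_eq_zero {x : ι →₀ ℤ}
    (hx : piHom R (zbLift (fun i => b i) x) = 0) : ∃ y, x = (p : ℤ) • y := by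
  rw [piHom_zbLift, LinearEquiv.map_eq_zero_iff] at hx
  refine ⟨x.mapRange (· / (p : ℤ)) (Int.zero_ediv _), Finsupp.ext fun i => ?_⟩
  have hdvd : (p : ℤ) ∣ x i := by
    simpa [ZMod.intCast_zmod_eq_zero_iff_dvd] using DFunLike.congr_fun hx i
  simp [Int.mul_ediv_cancel' hdvd]

end Basis

section Witt

variable {R : Type*} [CommRing R] (p : ℕ) [Fact p.Prime]

noncomputable def teichmullerHom : ZR R →+* WittVector p R :=
  (MonoidAlgebra.lift ℤ (WittVector p R) R (WittVector.teichmuller p)).toRingHom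

theorem constantCoeff_comp_teichmullerHom :
    WittVector.constantCoeff.comp (teichmullerHom p) = piHom R := by
  ext r <;> simp [teichmullerHom]

variable [CharP R p]

theorem Iid_eq_comap_teichmullerHom (hperf : Function.Bijective fun x : R => x ^ p) :
    Iid R = (Ideal.span {(p : WittVector p R)}).comap (teichmullerHom p) := by
  have : PerfectRing R p := ⟨hperf⟩
  rw [← WittVector.ker_constantCoeff, RingHom.comap_ker, constantCoeff_comp_teichmullerHom, Iid]

theorem map_Iid_pow_le (hperf : Function.Bijective fun x : R => x ^ p) (n : ℕ) :
    (Iid R ^ n).map (teichmullerHom p) ≤ Ideal.span {(p : WittVector p R) ^ n} := by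
  rw [Ideal.map_pow, ← Ideal.span_singleton_pow, Iid_eq_comap_teichmullerHom p hperf]
  exact Ideal.pow_right_mono Ideal.map_comap_le n

variable [Algebra (ZMod p) R] {ι : Type*} (b : Module.Basis ι (ZMod p) R)

theorem exists_eq_pow_smul_of_teichmullerHom_zbLift_mem
    (hperf : Function.Bijective fun x : R => x ^ p) (n : ℕ) {x : ι →₀ ℤ}
    (hx : teichmullerHom p (zbLift (fun i => b i) x) ∈ Ideal.span {(p : WittVector p R) ^ n}) :
    ∃ y, x = (p : ℤ) ^ n • y := by
  have : PerfectRing R p := ⟨hperf⟩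
  induction n generalizing x with
  | zero => exact ⟨x, by simp⟩
  | succ n ih =>
    have hxI : zbLift (fun i => b i) x ∈ Iid R := by
      rw [Iid_eq_comap_teichmullerHom p hperf]
      exact Ideal.span_singleton_le_span_singleton.2 (dvd_pow_self _ n.succ_ne_zero) hx
    obtain ⟨y, rfl⟩ := exists_eq_smul_of_piHom_zbLift_eq_zero p b hxI
    obtain ⟨c, hc⟩ := Ideal.mem_span_singleton.1 hx
    rw [map_zsmul, map_zsmul, zsmul_eq_mul, Int.cast_natCast, pow_succ', mul_assoc] at hc
    have hy : teichmullerHom p (zbLift (fun i => b i) y) ∈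
        Ideal.span {(p : WittVector p R) ^ n} := by
      refine Ideal.mem_span_singleton.2 ⟨c, sub_eq_zero.1 (WittVector.eq_zero_of_p_mul_eq_zero _ ?_)⟩
      linear_combination hc
    obtain ⟨z, rfl⟩ := ih hy
    exact ⟨z, by rw [smul_smul, pow_succ']⟩

end Witt

theorem statement10_general (p : ℕ) [Fact p.Prime] (R : Type*) [CommRing R] [CharP R p]
    (hperf : Function.Bijective fun x : R => x ^ p)
    [Algebra (ZMod p) R] (ι : Type*) (b : Module.Basis ι (ZMod p) R) (n : ℕ) :
    Function.Surjective (zbMap R (fun i => b i) n) ∧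
    ∀ x : ι →₀ ℤ, zbMap R (fun i => b i) n x = 0 ↔ ∃ y : ι →₀ ℤ, x = (p : ℤ) ^ n • y := by
  refine ⟨fun z => ?_, fun x => ?_⟩
  · obtain ⟨z, rfl⟩ := Ideal.Quotient.mk_surjective z
    obtain ⟨_, ⟨x, rfl⟩, hx⟩ := (zbLift (fun i => b i)).range.exists_sub_mem_pow_of_exists_sub_mem
      (natCast_mem_Iid p) (Iid_le_span_sup_sq p hperf) (exists_mem_range_zbLift_sub_mem_Iid p b) n z
    exact ⟨x, by rw [zbMap_apply, (Ideal.Quotient.eq.2 hx).symm]⟩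
  · rw [zbMap_apply, Ideal.Quotient.eq_zero_iff_mem]
    constructor
    · exact fun hx => exists_eq_pow_smul_of_teichmullerHom_zbLift_mem p b hperf n
        (map_Iid_pow_le p hperf n (Ideal.mem_map_of_mem _ hx))
    · rintro ⟨y, rfl⟩
      rw [map_zsmul, zsmul_eq_mul, Int.cast_pow, Int.cast_natCast]
      exact Ideal.mul_mem_right _ _ (Ideal.pow_mem_pow (natCast_mem_Iid p) n)

/-- Let `p` be a prime, `R` a perfect `𝔽_p`-algebra and `𝔟` an
`𝔽_p`-vector-space basis of `R`.  Then for every `n ≥ 1` the additive map `ℤ𝔟 → ℤR/I^n`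
induced by `b ↦ [b]` is surjective with kernel `p^n·ℤ𝔟`; i.e. the induced additive map
`ℤ𝔟/p^n·ℤ𝔟 → ℤR/I^n` is bijective (consequently, the induced map from the `p`-adic
completion of `ℤ𝔟` to `C(R)` is a topological isomorphism of additive groups). -/
theorem statement10 (p : ℕ) [Fact p.Prime] (R : Type*) [CommRing R] [CharP R p]
    (hperf : Function.Bijective fun x : R => x ^ p)
    [Algebra (ZMod p) R] (ι : Type*) (b : Module.Basis ι (ZMod p) R) (n : ℕ) (hn : 1 ≤ n) :
    Function.Surjective (zbMap R (fun i => b i) n) ∧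
    ∀ x : ι →₀ ℤ, zbMap R (fun i => b i) n x = 0 ↔ ∃ y : ι →₀ ℤ, x = (p : ℤ) ^ n • y :=
  statement10_general p R hperf ι b n
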